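/- (Recovery of the Arjovsky–Bottou gradient identity, Eq. (13), under the optimal discriminator.) Let X be a measurable space, β a probability measure on X (p_data), θ₀ ∈ ℝ^d, P : ℝ^d → Measure X a family of probability measures with P θ₀ =: α (the generator family), and let r be an a.e.-representative with values in (0,1) of the Radon–Nikodym derivative dβ/d(α+β). Set ρ := (1/2)•(α+β). Assume: (i) β ≪ α, klDiv(β‖α) < ⊤, and log∘(1−r) is integrable with respect to β; (ii) there is a neighborhood U of θ₀ such that for all θ ∈ U, P θ ≪ ρ, klDiv(P θ‖ρ) < ⊤, and log∘r is integrable with respect to P θ; (iii) the function G̃(θ) := (1/2)·(klDiv(P θ‖β)).toReal − (JSD(P θ, β)).toReal is differentiable at θ₀; (iv) the function H(θ) := (klDiv((1/2)•P θ + (1/2)•β ‖ ρ)).toReal is differentiable at θ₀. Then F(θ) := −(1/2)∫ log(r x) d(P θ) − (1/2)∫ log(1−r x) dβ is differentiable at θ₀ and ∇F(θ₀) = ∇G̃(θ₀); i.e., the gradient of the negative GAN generator objective equals the gradient of ½KL(p_{g_θ}‖p_data) − JSD(p_{g_θ}‖p_data) at θ₀. -/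

import Mathlib

/-!
Take `ρ = ½(α + β)` as reference measure. The optimal discriminator says `dβ/dρ = 2r`, and
every divergence in `G` and `H` is an integral of log-densities relative to `ρ`; the terms involving
the mixture `m = ½ P θ + ½ β` cancel and leave
`½ KL(P θ‖β) - JSD(P θ, β) - KL(m‖ρ) = -½ ∫ log (2r) d(P θ + β)`.
Hence `F = G - H + const` near `θ₀`. Since `H ≥ 0` and `H θ₀ = KL(ρ‖ρ) = 0`, `θ₀` minimises `H`,
so `∇H(θ₀) = 0` and `∇F(θ₀) = ∇G(θ₀)`.
-/

open MeasureTheory Real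
open scoped ENNReal NNReal

open scoped Classical in
noncomputable def klDiv {X : Type*} [MeasurableSpace X] (μ ν : Measure X) : ℝ≥0∞ :=
  if μ ≪ ν ∧ Integrable (llr μ ν) μ then ENNReal.ofReal (∫ x, llr μ ν x ∂μ) else ⊤

noncomputable def JSD {X : Type*} [MeasurableSpace X] (μ ν : Measure X) : ℝ≥0∞ :=
  (1 / 2) * klDiv μ ((1 / 2 : ℝ≥0∞) • μ + (1 / 2 : ℝ≥0∞) • ν) +
    (1 / 2) * klDiv ν ((1 / 2 : ℝ≥0∞) • μ + (1 / 2 : ℝ≥0∞) • ν)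

section KL

variable {X : Type*} [MeasurableSpace X] {μ ν : Measure X}

lemma klDiv_eq_informationTheory_klDiv [IsFiniteMeasure μ] [IsFiniteMeasure ν]
    (h : μ Set.univ = ν Set.univ) : klDiv μ ν = InformationTheory.klDiv μ ν := by
  rw [klDiv, InformationTheory.klDiv_def]
  simp [measureReal_def, h]

lemma klDiv_self (μ : Measure X) [IsFiniteMeasure μ] : klDiv μ μ = 0 := by
  rw [klDiv_eq_informationTheory_klDiv rfl, InformationTheory.klDiv_self]

variable [IsProbabilityMeasure μ] [IsProbabilityMeasure ν]

lemma toReal_klDiv_eq_integral_llr (h : μ ≪ ν) : (klDiv μ ν).toReal = ∫ x, llr μ ν x ∂μ := by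
  rw [klDiv_eq_informationTheory_klDiv (by simp),
    InformationTheory.toReal_klDiv_of_measure_eq h (by simp)]

lemma klDiv_ne_top_iff : klDiv μ ν ≠ ⊤ ↔ μ ≪ ν ∧ Integrable (llr μ ν) μ := by
  rw [klDiv_eq_informationTheory_klDiv (by simp), InformationTheory.klDiv_ne_top_iff]

end KL

section LLR

variable {X : Type*} [MeasurableSpace X] {μ ν ξ : Measure X}

lemma abs_mul_log_le {t c : ℝ} (ht : 0 ≤ t) (htc : t ≤ c) : |t * log t| ≤ 1 + c ^ 2 := by
  have hlow : t - 1 ≤ t * log t := Real.self_sub_one_le_mul_log ht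
  have hup : t * log t ≤ t * (t - 1) := by
    rcases ht.eq_or_lt with rfl | ht
    · simp
    · exact mul_le_mul_of_nonneg_left (Real.log_le_sub_one_of_pos ht) ht.le
  rw [abs_le]
  constructor <;> nlinarith

lemma rnDeriv_le_of_le_smul [IsFiniteMeasure μ] [IsFiniteMeasure ν] {c : ℝ≥0}
    (h : μ ≤ c • ν) : μ.rnDeriv ν ≤ᵐ[ν] fun _ => c := by
  rcases eq_or_ne c 0 with rfl | hc
  · have hμ : μ = 0 := le_antisymm (by simpa using h) (Measure.zero_le μ)
    filter_upwards [hμ ▸ Measure.rnDeriv_zero ν] with x hx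
    simp [hx]
  have hle : μ.rnDeriv (c • ν) ≤ᵐ[ν] 1 := by
    simpa [Measure.ae_smul_measure_eq hc] using Measure.rnDeriv_le_one_of_le h
  filter_upwards [hle, Measure.rnDeriv_smul_right μ ν hc] with x hle hx
  rw [hx, Pi.smul_apply, ENNReal.smul_def, smul_eq_mul, Pi.one_apply, ENNReal.coe_inv hc,
    ENNReal.inv_mul_le_iff (by simpa) ENNReal.coe_ne_top, mul_one] at hle
  exact hle

lemma integrable_llr_of_le_smul [IsFiniteMeasure μ] [IsFiniteMeasure ν] {c : ℝ≥0}
    (h : μ ≤ c • ν) : Integrable (llr μ ν) μ := by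
  rw [← integrable_rnDeriv_mul_log_iff (Measure.absolutelyContinuous_of_le_smul h)]
  refine Integrable.of_bound (by fun_prop) (1 + (c : ℝ) ^ 2) ?_
  filter_upwards [rnDeriv_le_of_le_smul h] with x hx
  exact abs_mul_log_le ENNReal.toReal_nonneg (ENNReal.toReal_mono ENNReal.coe_ne_top hx)

lemma llr_ae_eq_llr_sub_llr [SigmaFinite μ] [SigmaFinite ν] [SigmaFinite ξ]
    (hμν : μ ≪ ν) (hνξ : ν ≪ ξ) :
    llr μ ν =ᵐ[μ] fun x => llr μ ξ x - llr ν ξ x := by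
  have hμξ := hμν.trans hνξ
  filter_upwards [hμξ.ae_le (Measure.rnDeriv_mul_rnDeriv hμν (κ := ξ)),
    Measure.rnDeriv_pos hμν, hμν.ae_le (Measure.rnDeriv_lt_top μ ν),
    hμν.ae_le (Measure.rnDeriv_pos hνξ), hμξ.ae_le (Measure.rnDeriv_lt_top ν ξ)]
    with x hmul hμν_pos hμν_top hνξ_pos hνξ_top
  rw [llr, llr, llr, ← hmul, Pi.mul_apply, ENNReal.toReal_mul,
    Real.log_mul (ENNReal.toReal_pos hμν_pos.ne' hμν_top.ne).ne'
      (ENNReal.toReal_pos hνξ_pos.ne' hνξ_top.ne).ne']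
  ring

lemma integrable_llr_of_le_smul_of_integrable [IsFiniteMeasure μ] [IsFiniteMeasure ν]
    [SigmaFinite ξ] {c : ℝ≥0} (h : μ ≤ c • ν) (hνξ : ν ≪ ξ)
    (hμξ : Integrable (llr μ ξ) μ) : Integrable (llr ν ξ) μ :=
  (hμξ.sub (integrable_llr_of_le_smul h)).congr <| by
    filter_upwards [llr_ae_eq_llr_sub_llr (Measure.absolutelyContinuous_of_le_smul h) hνξ]
      with x hx
    rw [Pi.sub_apply, hx]
    ring

end LLR

namespace MeasureTheory.Measure

lemma absolutelyContinuous_of_rnDeriv_ne_zero {X : Type*} [MeasurableSpace X] {μ ν : Measure X}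
    [ν.HaveLebesgueDecomposition μ] (hνμ : ν ≪ μ) (h : ∀ᵐ x ∂μ, ν.rnDeriv μ x ≠ 0) : μ ≪ ν := by
  rw [← withDensity_rnDeriv_eq ν μ hνμ]
  exact withDensity_absolutelyContinuous' (measurable_rnDeriv ν μ).aemeasurable h

end MeasureTheory.Measure

section Mixture

variable {X : Type*} [MeasurableSpace X] {μ ν ξ : Measure X}

lemma two_smul_half_smul_add (μ ν : Measure X) :
    (2 : ℝ≥0) • ((1 / 2 : ℝ≥0∞) • μ + (1 / 2 : ℝ≥0∞) • ν) = μ + ν := by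
  rw [smul_add, ← smul_assoc, ← smul_assoc, ENNReal.smul_def, smul_eq_mul, ENNReal.coe_ofNat,
    one_div, ENNReal.mul_inv_cancel two_ne_zero ENNReal.ofNat_ne_top, one_smul, one_smul]

lemma le_two_smul_half_smul_add_left (μ ν : Measure X) :
    μ ≤ (2 : ℝ≥0) • ((1 / 2 : ℝ≥0∞) • μ + (1 / 2 : ℝ≥0∞) • ν) :=
  two_smul_half_smul_add μ ν ▸ Measure.le_add_right le_rfl

lemma le_two_smul_half_smul_add_right (μ ν : Measure X) :
    ν ≤ (2 : ℝ≥0) • ((1 / 2 : ℝ≥0∞) • μ + (1 / 2 : ℝ≥0∞) • ν) :=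
  two_smul_half_smul_add μ ν ▸ Measure.le_add_left le_rfl

instance isProbabilityMeasure_half_smul_add [IsProbabilityMeasure μ] [IsProbabilityMeasure ν] :
    IsProbabilityMeasure ((1 / 2 : ℝ≥0∞) • μ + (1 / 2 : ℝ≥0∞) • ν) :=
  ⟨by simp [ENNReal.inv_two_add_inv_two]⟩

variable [IsProbabilityMeasure μ] [IsProbabilityMeasure ν]

lemma klDiv_ne_top_of_le_smul {c : ℝ≥0} (h : μ ≤ c • ν) : klDiv μ ν ≠ ⊤ :=
  klDiv_ne_top_iff.mpr ⟨Measure.absolutelyContinuous_of_le_smul h, integrable_llr_of_le_smul h⟩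

lemma toReal_JSD :
    (JSD μ ν).toReal
      = (1 / 2) * (klDiv μ ((1 / 2 : ℝ≥0∞) • μ + (1 / 2 : ℝ≥0∞) • ν)).toReal
        + (1 / 2) * (klDiv ν ((1 / 2 : ℝ≥0∞) • μ + (1 / 2 : ℝ≥0∞) • ν)).toReal := by
  have hμ := klDiv_ne_top_of_le_smul (le_two_smul_half_smul_add_left μ ν)
  have hν := klDiv_ne_top_of_le_smul (le_two_smul_half_smul_add_right μ ν)
  rw [JSD, ENNReal.toReal_add (by finiteness) (by finiteness), ENNReal.toReal_mul,
    ENNReal.toReal_mul]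
  simp

lemma toReal_klDiv_eq_integral_llr_sub [SigmaFinite ξ] (hμν : μ ≪ ν) (hνξ : ν ≪ ξ)
    (hμ : Integrable (llr μ ξ) μ) (hν : Integrable (llr ν ξ) μ) :
    (klDiv μ ν).toReal = ∫ x, llr μ ξ x ∂μ - ∫ x, llr ν ξ x ∂μ := by
  rw [toReal_klDiv_eq_integral_llr hμν, ← integral_sub hμ hν]
  exact integral_congr_ae (llr_ae_eq_llr_sub_llr hμν hνξ)

lemma half_klDiv_sub_JSD_sub_klDiv_eq_integral_llr [IsProbabilityMeasure ξ]
    (hμν : μ ≪ ν) (hνξ : ν ≪ ξ) (hμ : Integrable (llr μ ξ) μ)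
    (hνμ : Integrable (llr ν ξ) μ) (hν : Integrable (llr ν ξ) ν) :
    (1 / 2) * (klDiv μ ν).toReal - (JSD μ ν).toReal
      - (klDiv ((1 / 2 : ℝ≥0∞) • μ + (1 / 2 : ℝ≥0∞) • ν) ξ).toReal
      = -(1 / 2) * (∫ x, llr ν ξ x ∂μ + ∫ x, llr ν ξ x ∂ν) := by
  set m := (1 / 2 : ℝ≥0∞) • μ + (1 / 2 : ℝ≥0∞) • ν
  have hμm := le_two_smul_half_smul_add_left μ ν
  have hνm := le_two_smul_half_smul_add_right μ ν
  have hmξ : m ≪ ξ := ((hμν.trans hνξ).smul_left _).add_left (hνξ.smul_left _)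
  have hmμ := integrable_llr_of_le_smul_of_integrable hμm hmξ hμ
  have hmν := integrable_llr_of_le_smul_of_integrable hνm hmξ hν
  have hm : (klDiv m ξ).toReal = (1 / 2) * ∫ x, llr m ξ x ∂μ + (1 / 2) * ∫ x, llr m ξ x ∂ν := by
    rw [toReal_klDiv_eq_integral_llr hmξ, integral_add_measure (hmμ.smul_measure (by simp))
      (hmν.smul_measure (by simp)), integral_smul_measure, integral_smul_measure]
    simp [m]
  rw [toReal_JSD, hm, toReal_klDiv_eq_integral_llr_sub hμν hνξ hμ hνμ,
    toReal_klDiv_eq_integral_llr_sub (Measure.absolutelyContinuous_of_le_smul hμm) hmξ hμ hmμ,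
    toReal_klDiv_eq_integral_llr_sub (Measure.absolutelyContinuous_of_le_smul hνm) hmξ hν hmν]
  ring

end Mixture

section OptimalDiscriminator

variable {X : Type*} [MeasurableSpace X] {α β : Measure X} [IsProbabilityMeasure α]
  [IsProbabilityMeasure β] {r : X → ℝ}

lemma rnDeriv_half_smul_add_ae_eq
    (hr : (fun x => ENNReal.ofReal (r x)) =ᵐ[α + β] β.rnDeriv (α + β)) :
    β.rnDeriv ((1 / 2 : ℝ≥0∞) • α + (1 / 2 : ℝ≥0∞) • β)
      =ᵐ[(1 / 2 : ℝ≥0∞) • α + (1 / 2 : ℝ≥0∞) • β] fun x => ENNReal.ofReal (2 * r x) := by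
  rw [← smul_add]
  refine Measure.smul_absolutelyContinuous.ae_le ?_
  filter_upwards [Measure.rnDeriv_smul_right_of_ne_top β (α + β) (r := 1 / 2) (by simp)
    (by simp), hr] with x hx hrx
  rw [hx, Pi.smul_apply, ← hrx, ENNReal.ofReal_mul zero_le_two]
  simp

lemma llr_half_smul_add_ae_eq (hr0 : ∀ x, 0 < r x)
    (hr : (fun x => ENNReal.ofReal (r x)) =ᵐ[α + β] β.rnDeriv (α + β)) :
    llr β ((1 / 2 : ℝ≥0∞) • α + (1 / 2 : ℝ≥0∞) • β)
      =ᵐ[(1 / 2 : ℝ≥0∞) • α + (1 / 2 : ℝ≥0∞) • β] fun x => log 2 + log (r x) := by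
  filter_upwards [rnDeriv_half_smul_add_ae_eq hr] with x hx
  rw [llr, hx, ENNReal.toReal_ofReal (by linarith [hr0 x]),
    Real.log_mul two_ne_zero (hr0 x).ne']

lemma half_smul_add_absolutelyContinuous (hr0 : ∀ x, 0 < r x)
    (hr : (fun x => ENNReal.ofReal (r x)) =ᵐ[α + β] β.rnDeriv (α + β)) :
    (1 / 2 : ℝ≥0∞) • α + (1 / 2 : ℝ≥0∞) • β ≪ β := by
  refine Measure.absolutelyContinuous_of_rnDeriv_ne_zero
    (Measure.absolutelyContinuous_of_le_smul (le_two_smul_half_smul_add_right α β)) ?_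
  filter_upwards [rnDeriv_half_smul_add_ae_eq hr] with x hx
  rw [hx, ne_eq, ENNReal.ofReal_eq_zero, not_le]
  linarith [hr0 x]

end OptimalDiscriminator

lemma differentiableAt_and_fderiv_eq_of_isLocalMin {E : Type*} [NormedAddCommGroup E]
    [NormedSpace ℝ E] {f g h : E → ℝ} {x : E} {c : ℝ}
    (hfgh : f =ᶠ[nhds x] fun y => g y - h y + c) (hg : DifferentiableAt ℝ g x)
    (hh : DifferentiableAt ℝ h x) (hmin : IsLocalMin h x) :
    DifferentiableAt ℝ f x ∧ fderiv ℝ f x = fderiv ℝ g x := by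
  refine ⟨((hg.sub hh).add_const c).congr_of_eventuallyEq hfgh, ?_⟩
  rw [hfgh.fderiv_eq, fderiv_add_const, fderiv_fun_sub hg hh, hmin.fderiv_eq_zero, sub_zero]

theorem gan_generator_gradient_optimal_discriminator_general
    {X : Type*} [MeasurableSpace X] (β : Measure X) [IsProbabilityMeasure β]
    {d : ℕ} (θ₀ : EuclideanSpace ℝ (Fin d))
    (P : EuclideanSpace ℝ (Fin d) → Measure X) [∀ θ, IsProbabilityMeasure (P θ)]
    (r : X → ℝ) (hr01 : ∀ x, r x ∈ Set.Ioo (0 : ℝ) 1)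
    (hr_rnDeriv : (fun x => ENNReal.ofReal (r x)) =ᵐ[P θ₀ + β] β.rnDeriv (P θ₀ + β))
    (ρ : Measure X) (hρ : ρ = (1 / 2 : ℝ≥0∞) • (P θ₀ + β))
    (hU : ∃ U ∈ nhds θ₀, ∀ θ ∈ U, P θ ≪ ρ ∧ klDiv (P θ) ρ < ⊤ ∧
      Integrable (fun x => Real.log (r x)) (P θ))
    (G : EuclideanSpace ℝ (Fin d) → ℝ)
    (hG_def : G = fun θ => (1 / 2) * (klDiv (P θ) β).toReal - (JSD (P θ) β).toReal)
    (hG : DifferentiableAt ℝ G θ₀)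
    (H : EuclideanSpace ℝ (Fin d) → ℝ)
    (hH_def : H = fun θ =>
      (klDiv ((1 / 2 : ℝ≥0∞) • P θ + (1 / 2 : ℝ≥0∞) • β) ρ).toReal)
    (hH : DifferentiableAt ℝ H θ₀)
    (F : EuclideanSpace ℝ (Fin d) → ℝ)
    (hF_def : F = fun θ => -((1 / 2) * ∫ x, Real.log (r x) ∂(P θ))
      - (1 / 2) * ∫ x, Real.log (1 - r x) ∂β) :
    DifferentiableAt ℝ F θ₀ ∧ fderiv ℝ F θ₀ = fderiv ℝ G θ₀ := by
  obtain ⟨U, hU_nhds, hU⟩ := hU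
  rw [smul_add] at hρ
  subst hρ
  have hr0 : ∀ x, 0 < r x := fun x => (hr01 x).1
  have hβρ := le_two_smul_half_smul_add_right (P θ₀) β
  have hllr := llr_half_smul_add_ae_eq hr0 hr_rnDeriv
  refine differentiableAt_and_fderiv_eq_of_isLocalMin (c := (1 / 2) * log 2
    + (1 / 2) * ∫ x, llr β ((1 / 2 : ℝ≥0∞) • P θ₀ + (1 / 2 : ℝ≥0∞) • β) x ∂β
    - (1 / 2) * ∫ x, log (1 - r x) ∂β) ?_ hG hH ?_
  · filter_upwards [hU_nhds] with θ hθ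
    obtain ⟨hθρ, hθkl, hθr⟩ := hU θ hθ
    have hllrθ : llr β _ =ᵐ[P θ] fun x => log 2 + log (r x) := hθρ.ae_le hllr
    have hllr_int := ((integrable_const (log 2)).add hθr).congr hllrθ.symm
    have hid := half_klDiv_sub_JSD_sub_klDiv_eq_integral_llr
      (hθρ.trans (half_smul_add_absolutelyContinuous hr0 hr_rnDeriv))
      (Measure.absolutelyContinuous_of_le_smul hβρ) (klDiv_ne_top_iff.mp hθkl.ne).2 hllr_int
      (integrable_llr_of_le_smul hβρ)
    rw [integral_congr_ae hllrθ, integral_add (integrable_const _) hθr] at hid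
    simp only [hF_def, hG_def, hH_def, integral_const, probReal_univ, one_smul] at hid ⊢
    linarith
  · refine Filter.Eventually.of_forall fun θ => ?_
    simp only [hH_def, klDiv_self, ENNReal.toReal_zero]
    exact ENNReal.toReal_nonneg

/-- Recovery of the Arjovsky–Bottou gradient identity under the optimal discriminator:
the gradient of the negative GAN generator objective at `θ₀` equals the gradient of
`½·KL(p_{g_θ}‖p_data) − JSD(p_{g_θ}, p_data)` at `θ₀`. -/
theorem gan_generator_gradient_optimal_discriminator
    {X : Type*} [MeasurableSpace X] (β : Measure X) [IsProbabilityMeasure β]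
    {d : ℕ} (θ₀ : EuclideanSpace ℝ (Fin d))
    (P : EuclideanSpace ℝ (Fin d) → Measure X) [∀ θ, IsProbabilityMeasure (P θ)]
    (r : X → ℝ) (hr_meas : Measurable r) (hr01 : ∀ x, r x ∈ Set.Ioo (0 : ℝ) 1)
    (hr_rnDeriv : (fun x => ENNReal.ofReal (r x)) =ᵐ[P θ₀ + β] β.rnDeriv (P θ₀ + β))
    (ρ : Measure X) (hρ : ρ = (1 / 2 : ℝ≥0∞) • (P θ₀ + β))
    (hβac : β ≪ P θ₀) (hβkl : klDiv β (P θ₀) < ⊤)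
    (hβint : Integrable (fun x => Real.log (1 - r x)) β)
    (hU : ∃ U ∈ nhds θ₀, ∀ θ ∈ U, P θ ≪ ρ ∧ klDiv (P θ) ρ < ⊤ ∧
      Integrable (fun x => Real.log (r x)) (P θ))
    (G : EuclideanSpace ℝ (Fin d) → ℝ)
    (hG_def : G = fun θ => (1 / 2) * (klDiv (P θ) β).toReal - (JSD (P θ) β).toReal)
    (hG : DifferentiableAt ℝ G θ₀)
    (H : EuclideanSpace ℝ (Fin d) → ℝ)
    (hH_def : H = fun θ =>
      (klDiv ((1 / 2 : ℝ≥0∞) • P θ + (1 / 2 : ℝ≥0∞) • β) ρ).toReal)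
    (hH : DifferentiableAt ℝ H θ₀)
    (F : EuclideanSpace ℝ (Fin d) → ℝ)
    (hF_def : F = fun θ => -((1 / 2) * ∫ x, Real.log (r x) ∂(P θ))
      - (1 / 2) * ∫ x, Real.log (1 - r x) ∂β) :
    DifferentiableAt ℝ F θ₀ ∧ fderiv ℝ F θ₀ = fderiv ℝ G θ₀ :=
  gan_generator_gradient_optimal_discriminator_general β θ₀ P r hr01 hr_rnDeriv ρ hρ hU G hG_def hG
    H hH_def hH F hF_def
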